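/- arXiv:2210.14198 — 2 statements merged into one kernel-verified Lean document; each statement's English description precedes it below -/
import Mathlib

section
/- Let E be a finite-dimensional real inner product space with Lebesgue (Haar) measure, and let f : E → ℝ be a smooth function that is constant outside some compact set. Then ∫ (2·Δf(x) − ‖∇f(x)‖²) · e^{-f(x)} dx = ∫ ‖∇f(x)‖² · e^{-f(x)} dx = 4 · ∫ ‖∇(y ↦ e^{-f(y)/2})(x)‖² dx, all integrands being compactly supported. -/
open Real MeasureTheory

/-- The Laplacian of a map `u : E → F` on a finite-dimensional real inner product space:
the sum of the second derivatives `∂²u/∂eᵢ²` over an orthonormal basis `(eᵢ)` of `E`. -/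
noncomputable def laplacian {E F : Type*} [NormedAddCommGroup E] [InnerProductSpace ℝ E]
    [FiniteDimensional ℝ E] [NormedAddCommGroup F] [NormedSpace ℝ F]
    (u : E → F) (x : E) : F :=
  ∑ i, fderiv ℝ (fderiv ℝ u) x (stdOrthonormalBasis ℝ E i) (stdOrthonormalBasis ℝ E i)

section Aux

variable {E : Type*} [NormedAddCommGroup E] [InnerProductSpace ℝ E] [FiniteDimensional ℝ E]
  [MeasurableSpace E] [BorelSpace E] (μ : MeasureTheory.Measure E) [μ.IsAddHaarMeasure]

/-- The integral of a directional derivative of a smooth compactly supported function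
vanishes. -/
lemma integral_fderiv_apply_zero (h : E → ℝ) (hh : ContDiff ℝ (⊤ : ℕ∞) h)
    (hsupp : HasCompactSupport h) (v : E) : ∫ x, fderiv ℝ h x v ∂μ = 0 := by
  have hdiff : Differentiable ℝ h := hh.differentiable (by simp)
  obtain ⟨C, hC⟩ :=
    (hsupp.fderiv ℝ).exists_bound_of_continuous ((hh.fderiv_right (m := (⊤ : ℕ∞)) (by simp)).continuous)
  have hlip : LipschitzWith (Real.toNNReal C) h := by
    apply lipschitzWith_of_nnnorm_fderiv_le hdiff
    intro x
    rw [← NNReal.coe_le_coe, coe_nnnorm, Real.coe_toNNReal']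
    exact le_trans (hC x) (le_max_left _ _)
  have H := LipschitzWith.integral_lineDeriv_mul_eq (μ := μ)
      (LipschitzWith.const (α := E) (1 : ℝ)) hlip hsupp (-v)
  have h0 : ∀ x : E, lineDeriv ℝ (fun _ : E => (1 : ℝ)) x (-v) = 0 := by
    intro x
    rw [(differentiableAt_const (1 : ℝ)).lineDeriv_eq_fderiv]
    simp
  simp only [h0, zero_mul, integral_zero, neg_neg, mul_one] at H
  have h1 : ∀ x : E, lineDeriv ℝ h x v = fderiv ℝ h x v := fun x =>
    (hdiff x).lineDeriv_eq_fderiv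
  simp only [h1] at H
  exact H.symm

/-- The integral of the Laplacian of a smooth compactly supported function vanishes. -/
lemma integral_laplacian_zero (g : E → ℝ) (hg : ContDiff ℝ (⊤ : ℕ∞) g)
    (hsupp : HasCompactSupport g) : ∫ x, laplacian g x ∂μ = 0 := by
  have hg1 : ContDiff ℝ (⊤ : ℕ∞) (fderiv ℝ g) := hg.fderiv_right (m := (⊤ : ℕ∞)) (by simp)
  have hg1d : Differentiable ℝ (fderiv ℝ g) := hg1.differentiable (by simp)
  have hcont2 : Continuous (fderiv ℝ (fderiv ℝ g)) := (hg1.fderiv_right (m := (⊤ : ℕ∞)) (by simp)).continuous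
  unfold laplacian
  rw [integral_finset_sum]
  · apply Finset.sum_eq_zero
    intro i _
    set v := stdOrthonormalBasis ℝ E i with hv
    have h1 : ContDiff ℝ (⊤ : ℕ∞) (fun y => fderiv ℝ g y v) := hg1.clm_apply contDiff_const
    have h2 : HasCompactSupport (fun y => fderiv ℝ g y v) := hsupp.fderiv_apply ℝ v
    have h3 : ∀ x, fderiv ℝ (fun y => fderiv ℝ g y v) x v = fderiv ℝ (fderiv ℝ g) x v v := by
      intro x
      rw [fderiv_clm_apply (hg1d x) (differentiableAt_const v)]
      simp
    calc ∫ x, fderiv ℝ (fderiv ℝ g) x v v ∂μ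
        = ∫ x, fderiv ℝ (fun y => fderiv ℝ g y v) x v ∂μ := by simp_rw [h3]
      _ = 0 := integral_fderiv_apply_zero μ _ h1 h2 v
  · intro i _
    apply Continuous.integrable_of_hasCompactSupport
    · exact (hcont2.clm_apply continuous_const).clm_apply continuous_const
    · exact ((hsupp.fderiv ℝ).fderiv_apply ℝ (stdOrthonormalBasis ℝ E i)).comp_left
        (g := fun L : E →L[ℝ] ℝ => L (stdOrthonormalBasis ℝ E i)) rfl

end Aux

/-- **Equivalence of the two formulations of Perelman's λ-entropy** (Euclidean form):
for a smooth `f : E → ℝ` constant outside a compact set,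
`∫ (2Δf − ‖∇f‖²) e^{-f} = ∫ ‖∇f‖² e^{-f} = 4 ∫ ‖∇(e^{-f/2})‖²`,
all integrands being compactly supported. -/
theorem weighted_scalar_energy_eq {E : Type*} [NormedAddCommGroup E]
    [InnerProductSpace ℝ E] [FiniteDimensional ℝ E] [MeasurableSpace E] [BorelSpace E]
    (μ : Measure E) [μ.IsAddHaarMeasure]
    (f : E → ℝ) (hf : ContDiff ℝ (⊤ : ℕ∞) f)
    (hconst : ∃ (K : Set E) (c : ℝ), IsCompact K ∧ ∀ x ∉ K, f x = c) :
    HasCompactSupport (fun x => (2 * laplacian f x - ‖gradient f x‖ ^ 2) * Real.exp (-f x)) ∧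
    HasCompactSupport (fun x => ‖gradient f x‖ ^ 2 * Real.exp (-f x)) ∧
    HasCompactSupport (fun x => ‖gradient (fun y => Real.exp (-f y / 2)) x‖ ^ 2) ∧
    (∫ x, (2 * laplacian f x - ‖gradient f x‖ ^ 2) * Real.exp (-f x) ∂μ
        = ∫ x, ‖gradient f x‖ ^ 2 * Real.exp (-f x) ∂μ) ∧
    (∫ x, ‖gradient f x‖ ^ 2 * Real.exp (-f x) ∂μ
        = 4 * ∫ x, ‖gradient (fun y => Real.exp (-f y / 2)) x‖ ^ 2 ∂μ) := by
  obtain ⟨K, c, hK, hKc⟩ := hconst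
  set u : E → ℝ := fun y => Real.exp (-f y / 2) with hu_def
  have hfd : Differentiable ℝ f := hf.differentiable (by simp)
  have hfd1 : ContDiff ℝ (⊤ : ℕ∞) (fderiv ℝ f) := hf.fderiv_right (m := (⊤ : ℕ∞)) (by simp)
  have hfd1d : Differentiable ℝ (fderiv ℝ f) := hfd1.differentiable (by simp)
  have hcont2 : Continuous (fderiv ℝ (fderiv ℝ f)) := (hfd1.fderiv_right (m := (⊤ : ℕ∞)) (by simp)).continuous
  -- vanishing of derivatives outside `K`
  have h1 : ∀ x ∉ K, fderiv ℝ f x = 0 := by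
    intro x hx
    have hev : f =ᶠ[nhds x] fun _ => c := by
      filter_upwards [hK.isClosed.isOpen_compl.mem_nhds hx] with y hy using hKc y hy
    rw [hev.fderiv_eq]
    exact fderiv_const_apply c
  have h2 : ∀ x ∉ K, fderiv ℝ (fderiv ℝ f) x = 0 := by
    intro x hx
    have hev : fderiv ℝ f =ᶠ[nhds x] fun _ => (0 : E →L[ℝ] ℝ) := by
      filter_upwards [hK.isClosed.isOpen_compl.mem_nhds hx] with y hy using h1 y hy
    rw [hev.fderiv_eq]
    exact fderiv_const_apply 0
  have hgrad0 : ∀ x ∉ K, gradient f x = 0 := by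
    intro x hx
    simp [gradient, h1 x hx]
  have hlap0 : ∀ x ∉ K, laplacian f x = 0 := by
    intro x hx
    simp [laplacian, h2 x hx]
  -- continuity facts
  have hcontgrad : Continuous (gradient f) := by
    show Continuous fun x => (InnerProductSpace.toDual ℝ E).symm (fderiv ℝ f x)
    exact (InnerProductSpace.toDual ℝ E).symm.continuous.comp hfd1.continuous
  have hcontlap : Continuous (laplacian f) := by
    apply continuous_finset_sum
    intro i _
    exact (hcont2.clm_apply continuous_const).clm_apply continuous_const
  -- gradient of u
  have hderu : ∀ x, HasFDerivAt u ((Real.exp (-f x / 2) * (-1 / 2 : ℝ)) • fderiv ℝ f x) x := by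
    intro x
    have h0 : HasFDerivAt (fun y => -f y / 2) ((-1 / 2 : ℝ) • fderiv ℝ f x) x := by
      have heq : (fun y => -f y / 2) = fun y => (-1 / 2 : ℝ) * f y := by
        funext y; ring
      rw [heq]
      exact (hfd x).hasFDerivAt.const_mul _
    have := h0.exp
    rwa [smul_smul] at this
  have hgradu : ∀ x, gradient u x = (Real.exp (-f x / 2) * (-1 / 2 : ℝ)) • gradient f x := by
    intro x
    show (InnerProductSpace.toDual ℝ E).symm (fderiv ℝ u x) = _
    rw [(hderu x).fderiv, LinearIsometryEquiv.map_smul]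
    rfl
  have hptu : ∀ x, ‖gradient u x‖ ^ 2 = 4⁻¹ * (‖gradient f x‖ ^ 2 * Real.exp (-f x)) := by
    intro x
    rw [hgradu x, norm_smul]
    have hexp : Real.exp (-f x / 2) ^ 2 = Real.exp (-f x) := by
      rw [sq, ← Real.exp_add]; ring_nf
    rw [mul_pow, Real.norm_eq_abs, abs_mul, abs_of_nonneg (Real.exp_pos _).le, mul_pow, hexp]
    rw [show |(-1 / 2 : ℝ)| = 1 / 2 by norm_num]
    ring
  -- compact supports
  have hcs1 : HasCompactSupport
      (fun x => (2 * laplacian f x - ‖gradient f x‖ ^ 2) * Real.exp (-f x)) :=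
    HasCompactSupport.intro hK fun x hx => by simp [hlap0 x hx, hgrad0 x hx]
  have hcs2 : HasCompactSupport (fun x => ‖gradient f x‖ ^ 2 * Real.exp (-f x)) :=
    HasCompactSupport.intro hK fun x hx => by simp [hgrad0 x hx]
  have hcs3 : HasCompactSupport (fun x => ‖gradient u x‖ ^ 2) :=
    HasCompactSupport.intro hK fun x hx => by simp [hgradu x, hgrad0 x hx]
  -- sum of squares of directional derivatives equals norm of gradient squared
  have hsum : ∀ x, ∑ i, (fderiv ℝ f x (stdOrthonormalBasis ℝ E i)) ^ 2
      = ‖gradient f x‖ ^ 2 := by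
    intro x
    have hv : ∀ v, fderiv ℝ f x v = inner ℝ (gradient f x) v := by
      intro v
      exact (InnerProductSpace.toDual_symm_apply (𝕜 := ℝ)).symm
    calc ∑ i, (fderiv ℝ f x (stdOrthonormalBasis ℝ E i)) ^ 2
        = ∑ i, inner ℝ (gradient f x) (stdOrthonormalBasis ℝ E i)
            * inner ℝ (stdOrthonormalBasis ℝ E i) (gradient f x) := by
          apply Finset.sum_congr rfl
          intro i _
          rw [hv, sq, real_inner_comm]
      _ = inner ℝ (gradient f x) (gradient f x) :=
          (stdOrthonormalBasis ℝ E).sum_inner_mul_inner _ _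
      _ = ‖gradient f x‖ ^ 2 := real_inner_self_eq_norm_sq _
  -- the auxiliary compactly supported function g₀ = e^{-f} - e^{-c}
  set w : E → ℝ := fun y => Real.exp (-f y) with hw_def
  set g₀ : E → ℝ := fun y => w y - Real.exp (-c) with hg0_def
  have hw_smooth : ContDiff ℝ (⊤ : ℕ∞) w := Real.contDiff_exp.comp hf.neg
  have hg0_smooth : ContDiff ℝ (⊤ : ℕ∞) g₀ := hw_smooth.sub contDiff_const
  have hg0_supp : HasCompactSupport g₀ :=
    HasCompactSupport.intro hK fun x hx => by simp [g₀, w, hKc x hx]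
  have hw' : ∀ x, HasFDerivAt w ((-Real.exp (-f x)) • fderiv ℝ f x) x := by
    intro x
    have := ((hfd x).hasFDerivAt.neg).exp
    simp only [Pi.neg_apply] at this
    rwa [show Real.exp (-f x) • -fderiv ℝ f x = (-Real.exp (-f x)) • fderiv ℝ f x by
      rw [smul_neg, neg_smul]] at this
  have hfg0 : fderiv ℝ g₀ = fun x => (-Real.exp (-f x)) • fderiv ℝ f x := by
    funext x
    rw [show g₀ = fun y => w y - Real.exp (-c) from rfl]
    rw [fderiv_sub_const]
    exact (hw' x).fderiv
  have hlapg0 : ∀ x, laplacian g₀ x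
      = Real.exp (-f x) * ‖gradient f x‖ ^ 2 - Real.exp (-f x) * laplacian f x := by
    intro x
    have ha : HasFDerivAt (fun x => -Real.exp (-f x))
        (Real.exp (-f x) • fderiv ℝ f x) x := by
      have := (hw' x).neg
      rwa [neg_smul, neg_neg] at this
    have hsm := ha.smul (hfd1d x).hasFDerivAt
    have hkey : fderiv ℝ (fderiv ℝ g₀) x
        = (-Real.exp (-f x)) • fderiv ℝ (fderiv ℝ f) x
          + (Real.exp (-f x) • fderiv ℝ f x).smulRight (fderiv ℝ f x) := by
      rw [hfg0]
      exact hsm.fderiv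
    unfold laplacian
    rw [hkey]
    simp only [ContinuousLinearMap.add_apply, ContinuousLinearMap.smul_apply,
      ContinuousLinearMap.smulRight_apply, smul_eq_mul, Finset.sum_add_distrib,
      ← Finset.mul_sum]
    rw [← hsum x]
    have hfac : ∑ i, Real.exp (-f x) * fderiv ℝ f x (stdOrthonormalBasis ℝ E i)
          * fderiv ℝ f x (stdOrthonormalBasis ℝ E i)
        = Real.exp (-f x) * ∑ i, (fderiv ℝ f x (stdOrthonormalBasis ℝ E i)) ^ 2 := by
      rw [Finset.mul_sum]
      exact Finset.sum_congr rfl fun i _ => by ring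
    rw [hfac]
    ring
  -- integrability
  have int1 : Integrable (fun x => Real.exp (-f x) * laplacian f x) μ := by
    apply Continuous.integrable_of_hasCompactSupport
    · exact (Real.continuous_exp.comp hf.continuous.neg).mul hcontlap
    · exact HasCompactSupport.intro hK fun x hx => by simp [hlap0 x hx]
  have int2 : Integrable (fun x => Real.exp (-f x) * ‖gradient f x‖ ^ 2) μ := by
    apply Continuous.integrable_of_hasCompactSupport
    · exact (Real.continuous_exp.comp hf.continuous.neg).mul ((hcontgrad.norm).pow 2)
    · exact HasCompactSupport.intro hK fun x hx => by simp [hgrad0 x hx]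
  -- integration by parts
  have key : ∫ x, (Real.exp (-f x) * ‖gradient f x‖ ^ 2
      - Real.exp (-f x) * laplacian f x) ∂μ = 0 := by
    simp_rw [← hlapg0]
    exact integral_laplacian_zero μ g₀ hg0_smooth hg0_supp
  rw [integral_sub int2 int1, sub_eq_zero] at key
  -- first equality
  have heq1 : ∫ x, (2 * laplacian f x - ‖gradient f x‖ ^ 2) * Real.exp (-f x) ∂μ
      = ∫ x, ‖gradient f x‖ ^ 2 * Real.exp (-f x) ∂μ := by
    have hrw : ∀ x, (2 * laplacian f x - ‖gradient f x‖ ^ 2) * Real.exp (-f x)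
        = 2 * (Real.exp (-f x) * laplacian f x)
          - Real.exp (-f x) * ‖gradient f x‖ ^ 2 := fun x => by ring
    have hrw2 : ∀ x, ‖gradient f x‖ ^ 2 * Real.exp (-f x)
        = Real.exp (-f x) * ‖gradient f x‖ ^ 2 := fun x => by ring
    simp_rw [hrw, hrw2]
    rw [integral_sub (int1.const_mul 2) int2, integral_const_mul, ← key]
    ring
  -- second equality
  have heq2 : ∫ x, ‖gradient f x‖ ^ 2 * Real.exp (-f x) ∂μ
      = 4 * ∫ x, ‖gradient u x‖ ^ 2 ∂μ := by
    simp_rw [hptu]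
    rw [integral_const_mul]
    ring
  exact ⟨hcs1, hcs2, hcs3, heq1, heq2⟩
end

section
/- Let E be a finite-dimensional real inner product space, let f : E → ℝ be continuously differentiable, R : E → ℝ continuous, N : E → ℝ continuous with N ≥ 0 everywhere, and let h : E → ℝ be a twice continuously differentiable, nonnegative, compactly supported function satisfying (1/2)·Δ_f h(x) = N(x) + (1/4)·R(x)·h(x) + (1/4)·e^{-f(x)}·h(x)² for all x ∈ E, where Δ_f h = Δh − (Dh)(∇f). Then for every x ∈ E, h(x) ≤ max(0, sup_y (−R(y)·e^{f(y)})). -/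
/-!
At a maximum point `x₀` of `h`, which exists because `h` is continuous with compact support,
`Dh` vanishes and every second derivative `∂²h/∂eᵢ²` is nonpositive (restrict `h` to lines
through `x₀`), so `Δ_f h (x₀) ≤ 0`. As `N ≥ 0`, the equation gives
`R h + e^{-f} h² ≤ 0` at `x₀`; dividing by `h x₀` when it is positive gives
`h ≤ h x₀ ≤ -R(x₀) e^{f(x₀)}`.
-/

open Real

theorem IsLocalMax.deriv_deriv_nonpos {g : ℝ → ℝ} {t₀ : ℝ} (hmax : IsLocalMax g t₀)
    (hc : ContinuousAt g t₀) : deriv (deriv g) t₀ ≤ 0 := by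
  by_contra! hpos
  -- The second-derivative test makes `t₀` also a local minimum, so `g` is locally constant.
  have hmin := isLocalMin_of_deriv_deriv_pos hpos hmax.deriv_eq_zero hc
  have hconst : g =ᶠ[nhds t₀] fun _ => g t₀ := by
    filter_upwards [hmax, hmin] with t h₁ h₂ using le_antisymm h₁ h₂
  refine hpos.ne' ?_
  rw [hconst.deriv.deriv_eq]
  simp

section

variable {E F : Type*} [NormedAddCommGroup E] [NormedSpace ℝ E]
  [NormedAddCommGroup F] [NormedSpace ℝ F]

theorem deriv_deriv_comp_add_smul {u : E → F} (hu : ContDiff ℝ 2 u) (x v : E) :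
    deriv (deriv fun t : ℝ => u (x + t • v)) 0 = fderiv ℝ (fderiv ℝ u) x v v := by
  have hline (t : ℝ) : HasDerivAt (fun s : ℝ => x + s • v) v t := by
    simpa using ((hasDerivAt_id t).smul_const v).const_add x
  have hderiv : deriv (fun t : ℝ => u (x + t • v)) = fun t => fderiv ℝ u (x + t • v) v := by
    funext t
    exact ((hu.differentiable two_ne_zero _).hasFDerivAt.comp_hasDerivAt t (hline t)).deriv
  have hu' : HasFDerivAt (fderiv ℝ u) (fderiv ℝ (fderiv ℝ u) x) (x + (0 : ℝ) • v) := by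
    rw [zero_smul, add_zero]
    exact ((hu.fderiv_right (m := 1) le_rfl).differentiable one_ne_zero x).hasFDerivAt
  have hD2 : HasDerivAt (fun t : ℝ => fderiv ℝ u (x + t • v) v) (fderiv ℝ (fderiv ℝ u) x v v) 0 := by
    have h1 : HasDerivAt (fun t : ℝ => fderiv ℝ u (x + t • v)) (fderiv ℝ (fderiv ℝ u) x v) 0 :=
      hu'.comp_hasDerivAt 0 (hline 0)
    simpa using h1.clm_apply (hasDerivAt_const (0 : ℝ) v)
  rw [hderiv, hD2.deriv]

theorem IsLocalMax.fderiv_fderiv_apply_self_nonpos {u : E → ℝ} {x : E} (hmax : IsLocalMax u x)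
    (hu : ContDiff ℝ 2 u) (v : E) : fderiv ℝ (fderiv ℝ u) x v v ≤ 0 := by
  rw [← deriv_deriv_comp_add_smul hu x v]
  have hline : Continuous fun t : ℝ => x + t • v := by fun_prop
  refine IsLocalMax.deriv_deriv_nonpos ?_ (hu.continuous.comp hline).continuousAt
  exact IsLocalMax.comp_continuous (by simpa using hmax) hline.continuousAt

end

theorem IsLocalMax.laplacian_nonpos {E : Type*} [NormedAddCommGroup E] [InnerProductSpace ℝ E]
    [FiniteDimensional ℝ E] {u : E → ℝ} {x : E} (hmax : IsLocalMax u x) (hu : ContDiff ℝ 2 u) :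
    laplacian u x ≤ 0 :=
  Finset.sum_nonpos fun _ _ => hmax.fderiv_fderiv_apply_self_nonpos hu _

theorem le_neg_mul_exp_of_mul_add_exp_neg_mul_sq_nonpos {a r φ : ℝ} (ha : 0 < a)
    (h : r * a + exp (-φ) * a ^ 2 ≤ 0) : a ≤ -r * exp φ := by
  have hr : r + exp (-φ) * a ≤ 0 := nonpos_of_mul_nonpos_left (by linarith) ha
  calc a = exp φ * (exp (-φ) * a) := by rw [exp_neg]; field_simp
    _ ≤ exp φ * -r := by gcongr; linarith
    _ = -r * exp φ := mul_comm _ _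

theorem weighted_C0_estimate_general {E : Type*} [NormedAddCommGroup E] [InnerProductSpace ℝ E]
    [FiniteDimensional ℝ E]
    (f : E → ℝ)
    (R N : E → ℝ) (hN0 : ∀ x, 0 ≤ N x)
    (h : E → ℝ) (hh : ContDiff ℝ 2 h) (hh0 : ∀ x, 0 ≤ h x) (hhc : HasCompactSupport h)
    (heq : ∀ x, (1 / 2) * (laplacian h x - fderiv ℝ h x (gradient f x))
        = N x + (1 / 4) * R x * h x + (1 / 4) * Real.exp (-f x) * (h x) ^ 2) :
    ∀ x, (h x : EReal) ≤ max 0 (⨆ y, ((-R y * Real.exp (f y) : ℝ) : EReal)) := by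
  obtain ⟨x₀, hx₀⟩ := hh.continuous.exists_forall_ge_of_hasCompactSupport hhc
  have hmax : IsLocalMax h x₀ := Filter.Eventually.of_forall hx₀
  have hmax_le : h x₀ ≤ max 0 (-R x₀ * exp (f x₀)) := by
    rcases (hh0 x₀).eq_or_lt with hzero | hpos
    · exact hzero ▸ le_max_left _ _
    refine le_max_of_le_right (le_neg_mul_exp_of_mul_add_exp_neg_mul_sq_nonpos hpos ?_)
    have := heq x₀
    rw [hmax.fderiv_eq_zero, zero_apply, sub_zero] at this
    linarith [hmax.laplacian_nonpos hh, hN0 x₀]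
  intro x
  calc (h x : EReal) ≤ ((max 0 (-R x₀ * exp (f x₀)) : ℝ) : EReal) :=
        EReal.coe_le_coe_iff.mpr ((hx₀ x).trans hmax_le)
    _ = max 0 ((-R x₀ * exp (f x₀) : ℝ) : EReal) := by
        rw [EReal.coe_strictMono.monotone.map_max, EReal.coe_zero]
    _ ≤ max 0 (⨆ y, ((-R y * Real.exp (f y) : ℝ) : EReal)) :=
        max_le_max le_rfl (le_iSup (fun y => ((-R y * exp (f y) : ℝ) : EReal)) x₀)

/-- **Weighted `C⁰`-estimate for monopoles** (Euclidean form):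
if `h ≥ 0` is `C²`, compactly supported, `N ≥ 0` continuous, `R` continuous, `f` of class
`C¹`, and `(1/2) Δ_f h = N + (1/4) R h + (1/4) e^{-f} h²` everywhere (with
`Δ_f h = Δh − (Dh)(∇f)`), then `h(x) ≤ max(0, sup_y (−R(y) e^{f(y)}))` for all `x`. -/
theorem weighted_C0_estimate {E : Type*} [NormedAddCommGroup E] [InnerProductSpace ℝ E]
    [FiniteDimensional ℝ E]
    (f : E → ℝ) (hf : ContDiff ℝ 1 f)
    (R N : E → ℝ) (hR : Continuous R) (hN : Continuous N) (hN0 : ∀ x, 0 ≤ N x)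
    (h : E → ℝ) (hh : ContDiff ℝ 2 h) (hh0 : ∀ x, 0 ≤ h x) (hhc : HasCompactSupport h)
    (heq : ∀ x, (1 / 2) * (laplacian h x - fderiv ℝ h x (gradient f x))
        = N x + (1 / 4) * R x * h x + (1 / 4) * Real.exp (-f x) * (h x) ^ 2) :
    ∀ x, (h x : EReal) ≤ max 0 (⨆ y, ((-R y * Real.exp (f y) : ℝ) : EReal)) :=
  weighted_C0_estimate_general f R N hN0 h hh hh0 hhc heq
end
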